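/- arXiv:2405.18752 — 5 statements merged into one kernel-verified Lean document; each statement's English description precedes it below -/
import Mathlib

section
/- In a directed graph under the f-local adversary model, if node h is not an in-neighbor of node i and there are at most 2f two-hop directed paths from h to i, then there exists an assignment of at most f malicious middle nodes (consistent with the f-local model) such that node i receives at most f copies of the true value of h and at least f copies of an identical false value, so majority voting at i cannot determine the true value of h. -/
open Finset
open scoped Classical

/-- If h is not an in-neighbor of i and there are at most 2f two-hop
paths from h to i, then there is a set M of at most f malicious middle nodes
(consistent with the f-local model at i) such that i receives at most f copies
of the true value of h and the true copies do not form a strict majority. -/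
theorem stmt0 {V : Type*} [Fintype V] [DecidableEq V]
    (E : V → V → Prop) (f : ℕ) (h i : V)
    (hni : ¬ E h i)
    (hpaths : (Finset.univ.filter (fun m => E h m ∧ E m i)).card ≤ 2 * f) :
    ∃ M : Finset V, M ⊆ Finset.univ.filter (fun m => E h m ∧ E m i) ∧
      M.card ≤ f ∧
      ((Finset.univ.filter (fun m => E h m ∧ E m i)) \ M).card ≤ f ∧
      ¬ ((Finset.univ.filter (fun m => E h m ∧ E m i)).card <
          2 * ((Finset.univ.filter (fun m => E h m ∧ E m i)) \ M).card) := by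
  set P := Finset.univ.filter (fun m => E h m ∧ E m i) with hP
  obtain ⟨M, hMsub, hMcard⟩ := Finset.exists_subset_card_eq
    (show (P.card + 1) / 2 ≤ P.card by omega)
  refine ⟨M, hMsub, ?_, ?_, ?_⟩ <;>
    · have := Finset.card_sdiff_of_subset hMsub
      omega
end

section
/- Let G=(V,E) be a strongly connected, incomplete directed graph that satisfies the detectability condition for Algorithm 3 under the f-local model (every two-hop in-neighbor of each node i is detectable by i, every out-neighbor of i is detectable by i, and every out-neighbor of any in-neighbor of i is detectable by i, where h is detectable by i if h is an in-neighbor of i or there are at least 2f+1 two-hop directed paths from h to i). Then every node of G has in-degree at least 2f+1. -/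
open Finset
open scoped Classical

/-- A strongly connected, incomplete digraph satisfying the
detectability condition for Algorithm 3 under the f-local model has minimum
in-degree at least 2f+1. -/
theorem stmt1 {V : Type*} [Fintype V] [DecidableEq V]
    (E : V → V → Prop) (f : ℕ)
    (hsc : ∀ i j : V, Relation.ReflTransGen E i j)
    (hinc : ∃ i j : V, i ≠ j ∧ ¬ E i j)
    (hdet1 : ∀ i h : V, h ≠ i → (∃ m, E h m ∧ E m i) →
      (E h i ∨ 2 * f + 1 ≤ (univ.filter (fun m => E h m ∧ E m i)).card))
    (hdet2 : ∀ i q : V, E i q →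
      (E q i ∨ 2 * f + 1 ≤ (univ.filter (fun m => E q m ∧ E m i)).card))
    (hdet3 : ∀ i j l : V, E j i → E j l → l ≠ i →
      (E l i ∨ 2 * f + 1 ≤ (univ.filter (fun m => E l m ∧ E m i)).card)) :
    ∀ i : V, 2 * f + 1 ≤ (univ.filter (fun j => E j i)).card := by
  intro i
  by_contra hlt
  -- any card-branch at i gives ≥ 2f+1 in-neighbors of i, impossible
  have key : ∀ h : V, h ≠ i → (∃ m, E h m ∧ E m i) → E h i := by
    intro h hne hm
    rcases hdet1 i h hne hm with h1 | h2
    · exact h1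
    · exfalso
      apply hlt
      refine le_trans h2 (Finset.card_le_card ?_)
      intro m hmem
      simp only [Finset.mem_filter, Finset.mem_univ, true_and] at hmem ⊢
      exact hmem.2
  -- every node on a path to i has an edge to i
  have edge_all : ∀ v : V, v ≠ i → E v i := by
    have main : ∀ v : V, Relation.ReflTransGen E v i → v = i ∨ E v i := by
      intro v hv
      induction hv using Relation.ReflTransGen.head_induction_on with
      | refl => exact Or.inl rfl
      | head hac hcb ih =>
        rename_i a c
        rcases ih with rfl | hci
        · exact Or.inr hac
        · by_cases hai : a = i
          · exact Or.inl hai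
          · exact Or.inr (key a hai ⟨c, hac, hci⟩)
    intro v hv
    exact (main v (hsc v i)).resolve_left hv
  -- hence in-degree of i is n-1, so n ≤ 2f+1
  have hsub : (univ.erase i) ⊆ univ.filter (fun j => E j i) := by
    intro v hv
    simp only [Finset.mem_erase, Finset.mem_univ, and_true] at hv
    simp only [Finset.mem_filter, Finset.mem_univ, true_and]
    exact edge_all v hv
  have hn : Fintype.card V - 1 < 2 * f + 1 := by
    have := Finset.card_le_card hsub
    rw [Finset.card_erase_of_mem (Finset.mem_univ i), Finset.card_univ] at this
    omega
  have hcard : Fintype.card V ≤ 2 * f + 1 := by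
    have : 0 < Fintype.card V := Fintype.card_pos_iff.mpr ⟨i⟩
    omega
  -- the missing edge
  obtain ⟨a, b, hab, hnab⟩ := hinc
  have hbi : b ≠ i := by
    rintro rfl
    exact hnab (edge_all a hab)
  -- b has an in-neighbor
  have hjb : ∃ j, E j b := by
    rcases (hsc i b).cases_tail with h | ⟨c, _, hcb⟩
    · exact absurd h hbi
    · exact ⟨c, hcb⟩
  obtain ⟨j, hjb⟩ := hjb
  -- a set of middles into b missing one vertex has card ≤ n-1 ≤ 2f
  have small : ∀ (S : Finset V) (x : V), x ∉ S → ¬ (2 * f + 1 ≤ S.card) := by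
    intro S x hx hle
    have : S ⊆ univ.erase x := by
      intro m hm
      simp only [Finset.mem_erase, Finset.mem_univ, and_true]
      rintro rfl; exact hx hm
    have := Finset.card_le_card this
    rw [Finset.card_erase_of_mem (Finset.mem_univ x), Finset.card_univ] at this
    omega
  by_cases hib : E i b
  · -- then a → i → b is a two-hop path, forcing E a b
    have hai : a ≠ i := by rintro rfl; exact hnab hib
    rcases hdet1 b a hab ⟨i, edge_all a hai, hib⟩ with h1 | h2
    · exact hnab h1
    · refine small _ a ?_ h2
      simp only [Finset.mem_filter, Finset.mem_univ, true_and]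
      rintro ⟨_, h⟩; exact hnab h
  · -- then use hdet3 at b with in-neighbor j and l = i
    have hji : j ≠ i := by rintro rfl; exact hib hjb
    rcases hdet3 b j i hjb (edge_all j hji) (Ne.symm hbi) with h1 | h2
    · exact hib h1
    · refine small _ i ?_ h2
      simp only [Finset.mem_filter, Finset.mem_univ, true_and]
      rintro ⟨_, h⟩; exact hib h
end

section
/- Let G=(V,E) be a connected undirected graph such that for every node i, every two-hop neighbor of i is detectable by i (i.e., is a direct neighbor of i or shares at least 2f+1 common neighbors with i). Then for any f-local set A ⊆ V of adversary nodes, the subgraph of G induced by the normal nodes V \ A is connected. -/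
open Finset
open scoped Classical

/-- In a connected undirected graph in which every two-hop neighbor
of any node is detectable by it, removing any f-local adversary set leaves the
induced subgraph on the normal nodes connected. -/
theorem stmt3 {V : Type*} [Fintype V] [DecidableEq V]
    (E : V → V → Prop) (f : ℕ)
    (hsym : ∀ i j, E i j → E j i)
    (hconn : ∀ i j : V, Relation.ReflTransGen E i j)
    (hdet : ∀ i h : V, h ≠ i → (∃ m, E h m ∧ E m i) →
      (E h i ∨ 2 * f + 1 ≤ (univ.filter (fun m => E h m ∧ E m i)).card))
    (A : Finset V)
    (hlocal : ∀ i ∉ A, ((univ.filter (fun j => E j i)) ∩ A).card ≤ f) :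
    ∀ i ∉ A, ∀ j ∉ A,
      Relation.ReflTransGen (fun a b => E a b ∧ a ∉ A ∧ b ∉ A) i j := by
  set R := fun a b => E a b ∧ a ∉ A ∧ b ∉ A with hR
  -- extracting a normal common neighbor
  have hcommon : ∀ i ∉ A, ∀ h : V,
      2 * f + 1 ≤ (univ.filter (fun m => E h m ∧ E m i)).card →
      ∃ m, m ∉ A ∧ E h m ∧ E m i := by
    intro i hi h hc
    set S := univ.filter (fun m => E h m ∧ E m i) with hS
    have hsub : S ∩ A ⊆ (univ.filter (fun j => E j i)) ∩ A := by
      intro x hx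
      simp only [hS, mem_inter, mem_filter, mem_univ, true_and] at hx ⊢
      exact ⟨hx.1.2, hx.2⟩
    have h1 : (S ∩ A).card ≤ f := le_trans (card_le_card hsub) (hlocal i hi)
    have h2 : 0 < (S \ A).card := by
      have := card_sdiff_add_card_inter S A
      omega
    obtain ⟨m, hm⟩ := Finset.card_pos.mp h2
    rw [mem_sdiff, hS, mem_filter] at hm
    exact ⟨m, hm.2, hm.1.2⟩
  -- main induction on walk length
  have key : ∀ n : ℕ, ∀ i : V, i ∉ A → ∀ j : V, j ∉ A → ∀ l : List V,
      l.length ≤ n → List.Chain E i (l ++ [j]) →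
      Relation.ReflTransGen R i j := by
    intro n
    induction n with
    | zero =>
      intro i hi j hj l hl hchain
      have hl0 : l = [] := List.length_eq_zero_iff.mp (Nat.le_zero.mp hl)
      subst hl0
      simp only [List.nil_append, List.Chain, List.chain_cons] at hchain
      by_cases hij : j = i
      · subst hij; exact Relation.ReflTransGen.refl
      · exact Relation.ReflTransGen.single ⟨hchain.1, hi, hj⟩
    | succ n ih =>
      intro i hi j hj l hl hchain
      match l with
      | [] => exact ih i hi j hj [] (by simp) hchain
      | b :: l' =>
        simp only [List.cons_append, List.Chain, List.chain_cons] at hchain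
        obtain ⟨hib, hchain⟩ := hchain
        by_cases hb : b ∈ A
        · -- b is adversarial
          match l' with
          | [] =>
            -- walk is i, b, j
            rw [List.nil_append, List.chain_cons] at hchain
            by_cases hij : j = i
            · subst hij; exact Relation.ReflTransGen.refl
            · rcases hdet i j hij ⟨b, hsym _ _ hchain.1, hsym _ _ hib⟩ with hd | hd
              · exact Relation.ReflTransGen.single ⟨hsym _ _ hd, hi, hj⟩
              · obtain ⟨m, hmA, hjm, hmi⟩ := hcommon i hi j hd
                exact Relation.ReflTransGen.head ⟨hsym _ _ hmi, hi, hmA⟩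
                  (Relation.ReflTransGen.single ⟨hsym _ _ hjm, hmA, hj⟩)
          | c :: l'' =>
            simp only [List.cons_append, List.Chain, List.chain_cons] at hchain
            obtain ⟨hbc, hchain⟩ := hchain
            by_cases hci : c = i
            · exact ih i hi j hj l'' (by simp at hl ⊢; omega) (hci ▸ hchain)
            · rcases hdet i c hci ⟨b, hsym _ _ hbc, hsym _ _ hib⟩ with hd | hd
              · exact ih i hi j hj (c :: l'') (by simp at hl ⊢; omega)
                  (by simp only [List.cons_append, List.Chain, List.chain_cons]
                      exact ⟨hsym _ _ hd, hchain⟩)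
              · obtain ⟨m, hmA, hcm, hmi⟩ := hcommon i hi c hd
                refine Relation.ReflTransGen.head ⟨hsym _ _ hmi, hi, hmA⟩ ?_
                exact ih m hmA j hj (c :: l'') (by simp at hl ⊢; omega)
                  (by simp only [List.cons_append, List.Chain, List.chain_cons]
                      exact ⟨hsym _ _ hcm, hchain⟩)
        · -- b is normal: take one step
          exact Relation.ReflTransGen.head ⟨hib, hi, hb⟩
            (ih b hb j hj l' (by simp at hl ⊢; omega) hchain)
  intro i hi j hj
  -- turn reachability into a walk
  have hwalk : ∀ i j : V, Relation.ReflTransGen E i j →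
      j = i ∨ ∃ l : List V, List.Chain E i (l ++ [j]) := by
    intro i j hrt
    induction hrt with
    | refl => exact Or.inl rfl
    | tail hab hbc ihw =>
      rename_i b c
      right
      rcases ihw with h | ⟨l, hl⟩
      · subst h; exact ⟨[], by simp [List.Chain, List.chain_cons, hbc]⟩
      · refine ⟨l ++ [b], ?_⟩
        have := (List.isChain_cons_append_cons_cons (R := E) (a := i) (b := b) (c := c)
          (l₁ := l) (l₂ := [])).mpr ⟨hl, hbc, List.Chain.nil⟩
        simpa [List.Chain] using this
  rcases hwalk i j (hconn i j) with h | ⟨l, hl⟩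
  · subst h; exact Relation.ReflTransGen.refl
  · exact key l.length i hi j hj l le_rfl hl
end

section
/- In the layered graph construction where nodes are arranged in L ≥ 2 layers of 2f+1 nodes each, with every node in layer ℓ adjacent (undirected) to every node in layers ℓ−1 and ℓ+1 and to no node in its own layer, every two-hop neighbor h of any node i is detectable by i: either h is adjacent to i, or h and i share at least 2f+1 common neighbors. -/
open Finset
open scoped Classical

/-- In the layered graph with L ≥ 2 layers of 2f+1 nodes each and
complete bipartite connections between consecutive layers, every two-hop
neighbor of any node is detectable by it. -/
theorem stmt13 (L f : ℕ) (hL : 2 ≤ L)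
    (Adj : (Fin L × Fin (2*f+1)) → (Fin L × Fin (2*f+1)) → Prop)
    (hAdj : ∀ u v, Adj u v ↔ (u.1.val + 1 = v.1.val ∨ v.1.val + 1 = u.1.val)) :
    ∀ i h : Fin L × Fin (2*f+1), h ≠ i → (∃ m, Adj h m ∧ Adj m i) →
      (Adj h i ∨ 2*f+1 ≤ (univ.filter (fun m => Adj h m ∧ Adj m i)).card) := by
  rintro i h _ ⟨m, hm1, hm2⟩
  right
  have hsub : (univ.image (fun b : Fin (2*f+1) => (m.1, b))) ⊆
      univ.filter (fun m' => Adj h m' ∧ Adj m' i) := by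
    intro x hx
    simp only [mem_image, mem_univ, true_and] at hx
    obtain ⟨b, rfl⟩ := hx
    simp only [mem_filter, mem_univ, true_and]
    rw [hAdj] at hm1 hm2 ⊢
    constructor
    · exact hm1
    · rw [hAdj]; exact hm2
  have hinj : Function.Injective (fun b : Fin (2*f+1) => (m.1, b)) := by
    intro a b hab
    simpa using congrArg Prod.snd hab
  have hcard := Finset.card_le_card hsub
  rwa [Finset.card_image_of_injective _ hinj, Finset.card_univ, Fintype.card_fin] at hcard
end

section
/- A graph can satisfy the detectability condition for Algorithm 3 without being connected: the disjoint union of two complete graphs K_m and K_m with m ≥ 2f+2 satisfies that every two-hop in-neighbor of each node is detectable, every out-neighbor is detectable, and every out-neighbor of every in-neighbor is detectable, yet the graph is not connected. -/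
open Finset
open scoped Classical

/-- The disjoint union of two complete graphs on m ≥ 2f+2 nodes
satisfies the detectability condition for Algorithm 3 yet is not connected. -/
theorem stmt18 (m f : ℕ) (hm : 2*f + 2 ≤ m)
    (E : (Fin m ⊕ Fin m) → (Fin m ⊕ Fin m) → Prop)
    (hE : ∀ u v, E u v ↔ ((∃ a b, u = Sum.inl a ∧ v = Sum.inl b ∧ a ≠ b) ∨
                          (∃ a b, u = Sum.inr a ∧ v = Sum.inr b ∧ a ≠ b))) :
    ((∀ i h, h ≠ i → (∃ w, E h w ∧ E w i) →
        (E h i ∨ 2*f+1 ≤ (univ.filter (fun w => E h w ∧ E w i)).card)) ∧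
     (∀ i q, E i q →
        (E q i ∨ 2*f+1 ≤ (univ.filter (fun w => E q w ∧ E w i)).card)) ∧
     (∀ i j l, E j i → E j l → l ≠ i →
        (E l i ∨ 2*f+1 ≤ (univ.filter (fun w => E l w ∧ E w i)).card))) ∧
    ¬ (∀ i j : Fin m ⊕ Fin m, Relation.ReflTransGen E i j) := by
  have hside : ∀ u v, E u v →
      ((∃ a b, u = Sum.inl a ∧ v = Sum.inl b) ∨ (∃ a b, u = Sum.inr a ∧ v = Sum.inr b)) := by
    intro u v huv
    rcases (hE u v).1 huv with ⟨a, b, h1, h2, _⟩ | ⟨a, b, h1, h2, _⟩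
    · exact Or.inl ⟨a, b, h1, h2⟩
    · exact Or.inr ⟨a, b, h1, h2⟩
  have hsame : ∀ u v, u ≠ v →
      ((∃ a b, u = Sum.inl a ∧ v = Sum.inl b) ∨ (∃ a b, u = Sum.inr a ∧ v = Sum.inr b)) →
      E u v := by
    intro u v hne hor
    rcases hor with ⟨a, b, h1, h2⟩ | ⟨a, b, h1, h2⟩
    · exact (hE u v).2 (Or.inl ⟨a, b, h1, h2, fun h => hne (by rw [h1, h2, h])⟩)
    · exact (hE u v).2 (Or.inr ⟨a, b, h1, h2, fun h => hne (by rw [h1, h2, h])⟩)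
  refine ⟨⟨?_, ?_, ?_⟩, ?_⟩
  · intro i h hne ⟨w, hw1, hw2⟩
    left
    apply hsame _ _ hne
    rcases hside _ _ hw1 with ⟨a, c, ha, hc⟩ | ⟨a, c, ha, hc⟩ <;>
      rcases hside _ _ hw2 with ⟨d, b, hd, hb⟩ | ⟨d, b, hd, hb⟩
    · exact Or.inl ⟨a, b, ha, hb⟩
    · simp [hc] at hd
    · simp [hc] at hd
    · exact Or.inr ⟨a, b, ha, hb⟩
  · intro i q hiq
    left
    have hne : i ≠ q := by
      rcases (hE i q).1 hiq with ⟨a, b, h1, h2, hab⟩ | ⟨a, b, h1, h2, hab⟩ <;>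
        · rw [h1, h2]; simpa using hab
    apply hsame _ _ (Ne.symm hne)
    rcases hside _ _ hiq with ⟨a, b, ha, hb⟩ | ⟨a, b, ha, hb⟩
    · exact Or.inl ⟨b, a, hb, ha⟩
    · exact Or.inr ⟨b, a, hb, ha⟩
  · intro i j l hji hjl hne
    left
    apply hsame _ _ hne
    rcases hside _ _ hji with ⟨a, c, ha, hc⟩ | ⟨a, c, ha, hc⟩ <;>
      rcases hside _ _ hjl with ⟨d, b, hd, hb⟩ | ⟨d, b, hd, hb⟩
    · exact Or.inl ⟨b, c, hb, hc⟩
    · simp [ha] at hd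
    · simp [ha] at hd
    · exact Or.inr ⟨b, c, hb, hc⟩
  · intro hconn
    have hm0 : 0 < m := by omega
    have hinl : ∀ j, Relation.ReflTransGen E (Sum.inl ⟨0, hm0⟩) j → ∃ b, j = Sum.inl b := by
      intro j hj
      induction hj with
      | refl => exact ⟨_, rfl⟩
      | tail _ he ih =>
        obtain ⟨b, rfl⟩ := ih
        rcases hside _ _ he with ⟨a, c, ha, hc⟩ | ⟨a, c, ha, hc⟩
        · exact ⟨c, hc⟩
        · simp at ha
    obtain ⟨b, hb⟩ := hinl (Sum.inr ⟨0, hm0⟩) (hconn _ _)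
    simp at hb
end
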